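/- If n and m are perpendicular unit vectors in ℝ³ and a, b are real, then the product U = exp(i a n·σ)·exp(i b m·σ) is a scalar multiple of the identity matrix if and only if both a and b are integer multiples of π. (This characterizes the band touching points of the two-band Floquet operator.) -/

import Mathlib

open Matrix Complex NormedSpace

noncomputable def σx : Matrix (Fin 2) (Fin 2) ℂ := !![0, 1; 1, 0]
noncomputable def σy : Matrix (Fin 2) (Fin 2) ℂ := !![0, -I; I, 0]
noncomputable def σz : Matrix (Fin 2) (Fin 2) ℂ := !![1, 0; 0, -1]

/-- n·σ for a real vector n. -/
noncomputable def pauli (n : Fin 3 → ℝ) : Matrix (Fin 2) (Fin 2) ℂ :=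
  (n 0 : ℂ) • σx + (n 1 : ℂ) • σy + (n 2 : ℂ) • σz

lemma pauli_entries (n : Fin 3 → ℝ) :
    pauli n = !![(n 2 : ℂ), (n 0 : ℂ) - (n 1 : ℂ) * I;
                 (n 0 : ℂ) + (n 1 : ℂ) * I, -(n 2 : ℂ)] := by
  ext i j
  fin_cases i <;> fin_cases j <;>
    simp [pauli, σx, σy, σz] <;> ring

/-- exp of c • P for idempotent P. -/
lemma exp_smul_idem (P : Matrix (Fin 2) (Fin 2) ℂ) (hP : P * P = P) (c : ℂ) :
    NormedSpace.exp (c • P) = 1 + (Complex.exp c - 1) • P := by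
  letI : SeminormedRing (Matrix (Fin 2) (Fin 2) ℂ) := Matrix.linftyOpSemiNormedRing
  letI : NormedRing (Matrix (Fin 2) (Fin 2) ℂ) := Matrix.linftyOpNormedRing
  letI : NormedAlgebra ℂ (Matrix (Fin 2) (Fin 2) ℂ) := Matrix.linftyOpNormedAlgebra
  have hpow : ∀ k : ℕ, P ^ (k + 1) = P := by
    intro k
    induction k with
    | zero => simp
    | succ k ih => rw [pow_succ, ih, hP]
  have hsumM : Summable fun k : ℕ => ((Nat.factorial k : ℂ))⁻¹ • (c • P) ^ k :=
    expSeries_summable' (𝕂 := ℂ) (c • P)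
  have hsumC : Summable fun k : ℕ => ((Nat.factorial k : ℂ))⁻¹ • c ^ k :=
    expSeries_summable' (𝕂 := ℂ) c
  have hsumC' : Summable fun k : ℕ => ((Nat.factorial (k + 1) : ℂ))⁻¹ * c ^ (k + 1) := by
    have := (summable_nat_add_iff (f := fun k : ℕ => ((Nat.factorial k : ℂ))⁻¹ • c ^ k) 1).2 hsumC
    simpa [smul_eq_mul] using this
  have hexpc : Complex.exp c = 1 + ∑' k : ℕ, ((Nat.factorial (k + 1) : ℂ))⁻¹ * c ^ (k + 1) := by
    rw [Complex.exp_eq_exp_ℂ, exp_eq_tsum ℂ]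
    beta_reduce
    rw [Summable.tsum_eq_zero_add hsumC]
    simp [smul_eq_mul]
  rw [exp_eq_tsum ℂ]
  beta_reduce
  rw [Summable.tsum_eq_zero_add hsumM]
  have hterm : ∀ k : ℕ, ((Nat.factorial (k + 1) : ℂ))⁻¹ • (c • P) ^ (k + 1)
      = (((Nat.factorial (k + 1) : ℂ))⁻¹ * c ^ (k + 1)) • P := by
    intro k
    rw [smul_pow, hpow, smul_smul]
  simp only [pow_zero, Nat.factorial_zero, Nat.cast_one, inv_one, one_smul, hterm]
  rw [Summable.tsum_smul_const hsumC', hexpc]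
  congr 1
  rw [add_sub_cancel_left]

/-- exp of c • A for an involution A. -/
lemma exp_smul_invol (A : Matrix (Fin 2) (Fin 2) ℂ) (hA : A * A = 1) (c : ℂ) :
    NormedSpace.exp (c • A) = Complex.cosh c • 1 + Complex.sinh c • A := by
  letI : SeminormedRing (Matrix (Fin 2) (Fin 2) ℂ) := Matrix.linftyOpSemiNormedRing
  letI : NormedRing (Matrix (Fin 2) (Fin 2) ℂ) := Matrix.linftyOpNormedRing
  letI : NormedAlgebra ℂ (Matrix (Fin 2) (Fin 2) ℂ) := Matrix.linftyOpNormedAlgebra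
  set P : Matrix (Fin 2) (Fin 2) ℂ := (2⁻¹ : ℂ) • (1 + A) with hPdef
  set Q : Matrix (Fin 2) (Fin 2) ℂ := (2⁻¹ : ℂ) • (1 - A) with hQdef
  have hP : P * P = P := by
    rw [hPdef, smul_mul_smul_comm, add_mul, mul_add, mul_add, hA]
    simp only [one_mul, mul_one]
    module
  have hQ : Q * Q = Q := by
    rw [hQdef, smul_mul_smul_comm, sub_mul, mul_sub, mul_sub, hA]
    simp only [one_mul, mul_one]
    module
  have hPQ : P * Q = 0 := by
    rw [hPdef, hQdef, smul_mul_smul_comm, add_mul, mul_sub, mul_sub, hA]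
    simp only [one_mul, mul_one]
    module
  have hQP : Q * P = 0 := by
    rw [hPdef, hQdef, smul_mul_smul_comm, sub_mul, mul_add, mul_add, hA]
    simp only [one_mul, mul_one]
    module
  have hsplit : c • A = c • P + (-c) • Q := by
    rw [hPdef, hQdef]
    module
  have hPQc : Commute P Q := by
    unfold Commute SemiconjBy
    rw [hPQ, hQP]
  have hcomm : Commute (c • P) ((-c) • Q) := (hPQc.smul_left c).smul_right (-c)
  rw [hsplit, Matrix.exp_add_of_commute _ _ hcomm, exp_smul_idem P hP, exp_smul_idem Q hQ]
  have hcosh : Complex.cosh c = (Complex.exp c + Complex.exp (-c)) / 2 := rfl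
  have hsinh : Complex.sinh c = (Complex.exp c - Complex.exp (-c)) / 2 := rfl
  have expand : (1 + (Complex.exp c - 1) • P) * (1 + (Complex.exp (-c) - 1) • Q)
      = 1 + (Complex.exp c - 1) • P + (Complex.exp (-c) - 1) • Q := by
    rw [mul_add, add_mul, add_mul, smul_mul_smul_comm, hPQ, smul_zero]
    simp only [one_mul, mul_one]
    abel
  rw [expand, hPdef, hQdef, hcosh, hsinh, smul_smul, smul_smul]
  module

lemma pauli_mul (n m : Fin 3 → ℝ) :
    pauli n * pauli m
      = ((n 0 * m 0 + n 1 * m 1 + n 2 * m 2 : ℝ) : ℂ) • 1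
        + I • pauli ![n 1 * m 2 - n 2 * m 1, n 2 * m 0 - n 0 * m 2, n 0 * m 1 - n 1 * m 0] := by
  rw [pauli_entries n, pauli_entries m, pauli_entries]
  ext i j
  fin_cases i <;> fin_cases j <;>
    · simp [Matrix.mul_apply, Fin.sum_univ_succ, Matrix.one_apply, Complex.ext_iff]
      push_cast
      first
      | (constructor <;> ring)
      | ring

lemma pauli_sq (n : Fin 3 → ℝ) (hn : n 0 ^ 2 + n 1 ^ 2 + n 2 ^ 2 = 1) :
    pauli n * pauli n = 1 := by
  rw [pauli_mul]
  have h0 : (fun i => (![n 1 * n 2 - n 2 * n 1, n 2 * n 0 - n 0 * n 2,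
      n 0 * n 1 - n 1 * n 0] : Fin 3 → ℝ) i) = ![n 1 * n 2 - n 2 * n 1, n 2 * n 0 - n 0 * n 2,
      n 0 * n 1 - n 1 * n 0] := rfl
  have hz : pauli ![n 1 * n 2 - n 2 * n 1, n 2 * n 0 - n 0 * n 2, n 0 * n 1 - n 1 * n 0] = 0 := by
    rw [pauli_entries]
    ext i j
    fin_cases i <;> fin_cases j <;> simp <;> push_cast <;> ring
  rw [hz, smul_zero, add_zero]
  have h1 : (n 0 * n 0 + n 1 * n 1 + n 2 * n 2 : ℝ) = 1 := by linear_combination hn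
  rw [h1]
  simp

lemma exp_I_smul (n : Fin 3 → ℝ) (hn : n 0 ^ 2 + n 1 ^ 2 + n 2 ^ 2 = 1) (a : ℝ) :
    NormedSpace.exp ((I * a) • pauli n)
      = ((Real.cos a : ℂ)) • 1 + ((Real.sin a : ℂ) * I) • pauli n := by
  rw [show (I * (a : ℂ)) = (a : ℂ) * I from mul_comm _ _,
    exp_smul_invol (pauli n) (pauli_sq n hn) ((a : ℂ) * I),
    Complex.cosh_mul_I, Complex.sinh_mul_I, Complex.ofReal_cos, Complex.ofReal_sin]

theorem stmt4 (n m : Fin 3 → ℝ)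
    (hn : n 0 ^ 2 + n 1 ^ 2 + n 2 ^ 2 = 1) (hm : m 0 ^ 2 + m 1 ^ 2 + m 2 ^ 2 = 1)
    (hperp : n 0 * m 0 + n 1 * m 1 + n 2 * m 2 = 0) (a b : ℝ) :
    (∃ c : ℂ, NormedSpace.exp ((I * a) • pauli n) * NormedSpace.exp ((I * b) • pauli m)
        = c • (1 : Matrix (Fin 2) (Fin 2) ℂ)) ↔
      (∃ l₁ : ℤ, a = l₁ * Real.pi) ∧ (∃ l₂ : ℤ, b = l₂ * Real.pi) := by
  have hEa := exp_I_smul n hn a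
  have hEb := exp_I_smul m hm b
  set wv : Fin 3 → ℝ :=
    ![Real.cos a * Real.sin b * m 0 + Real.sin a * Real.cos b * n 0
        - Real.sin a * Real.sin b * (n 1 * m 2 - n 2 * m 1),
      Real.cos a * Real.sin b * m 1 + Real.sin a * Real.cos b * n 1
        - Real.sin a * Real.sin b * (n 2 * m 0 - n 0 * m 2),
      Real.cos a * Real.sin b * m 2 + Real.sin a * Real.cos b * n 2
        - Real.sin a * Real.sin b * (n 0 * m 1 - n 1 * m 0)] with hwv
  have hU : NormedSpace.exp ((I * a) • pauli n) * NormedSpace.exp ((I * b) • pauli m)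
      = ((Real.cos a * Real.cos b
            - Real.sin a * Real.sin b * (n 0 * m 0 + n 1 * m 1 + n 2 * m 2) : ℝ) : ℂ) • 1
          + I • pauli wv := by
    rw [hEa, hEb, pauli_entries n, pauli_entries m, pauli_entries wv]
    ext i j
    fin_cases i <;> fin_cases j <;>
      · simp [hwv, Matrix.mul_apply, Fin.sum_univ_succ, Matrix.one_apply, Complex.ext_iff]
        push_cast
        first
        | (constructor <;> ring)
        | ring
  have hscal : (Real.cos a * Real.cos b
      - Real.sin a * Real.sin b * (n 0 * m 0 + n 1 * m 1 + n 2 * m 2) : ℝ)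
      = Real.cos a * Real.cos b := by rw [hperp]; ring
  rw [hscal] at hU
  constructor
  · rintro ⟨c, hc⟩
    rw [hU] at hc
    have h2 : I • pauli wv = (c - ((Real.cos a * Real.cos b : ℝ) : ℂ)) • 1 := by
      rw [sub_smul, ← hc]
      abel
    have h3 : pauli wv = ((-I) * (c - ((Real.cos a * Real.cos b : ℝ) : ℂ))) • 1 := by
      have h4 : ((-I) : ℂ) • (I • pauli wv) = pauli wv := by
        rw [smul_smul, neg_mul, Complex.I_mul_I, neg_neg, one_smul]
      rw [← h4, h2, smul_smul]
    rw [pauli_entries] at h3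
    have h01 := congr_fun (congr_fun h3 0) 1
    have h00 := congr_fun (congr_fun h3 0) 0
    have h11 := congr_fun (congr_fun h3 1) 1
    simp [Matrix.one_apply, Complex.ext_iff, hwv, Complex.cos_ofReal_re,
      Complex.sin_ofReal_re] at h01 h00 h11
    obtain ⟨e0, e1⟩ := h01
    have e2 : Real.cos a * Real.sin b * m 2 + Real.sin a * Real.cos b * n 2
        - Real.sin a * Real.sin b * (n 0 * m 1 - n 1 * m 0) = 0 := by
      linarith [h00.1, h11.1]
    have hscb : Real.sin a * Real.cos b = 0 := by
      linear_combination n 0 * e0 - n 1 * e1 + n 2 * e2 - Real.sin a * Real.cos b * hn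
        - Real.cos a * Real.sin b * hperp
    have hcsb : Real.cos a * Real.sin b = 0 := by
      linear_combination m 0 * e0 - m 1 * e1 + m 2 * e2 - Real.cos a * Real.sin b * hm
        - Real.sin a * Real.cos b * hperp
    have hssb : Real.sin a * Real.sin b = 0 := by
      linear_combination -((n 1 * m 2 - n 2 * m 1) * e0) + (n 2 * m 0 - n 0 * m 2) * e1
        - (n 0 * m 1 - n 1 * m 0) * e2
        - Real.sin a * Real.sin b * (n 0 ^ 2 + n 1 ^ 2 + n 2 ^ 2) * hm
        - Real.sin a * Real.sin b * hn
        + Real.sin a * Real.sin b * (n 0 * m 0 + n 1 * m 1 + n 2 * m 2) * hperp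
    have hsa : Real.sin a = 0 := by
      by_contra h
      have hsb : Real.sin b = 0 := by
        rcases mul_eq_zero.1 hssb with h' | h'
        · exact absurd h' h
        · exact h'
      have hcb : Real.cos b ≠ 0 := by
        intro h0
        have := Real.sin_sq_add_cos_sq b
        rw [hsb, h0] at this
        norm_num at this
      rcases mul_eq_zero.1 hscb with h' | h'
      · exact h h'
      · exact hcb h'
    have hsb : Real.sin b = 0 := by
      have hca : Real.cos a ≠ 0 := by
        intro h0
        have := Real.sin_sq_add_cos_sq a
        rw [hsa, h0] at this
        norm_num at this
      rcases mul_eq_zero.1 hcsb with h' | h'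
      · exact absurd h' hca
      · exact h'
    obtain ⟨k₁, hk₁⟩ := Real.sin_eq_zero_iff.1 hsa
    obtain ⟨k₂, hk₂⟩ := Real.sin_eq_zero_iff.1 hsb
    exact ⟨⟨k₁, hk₁.symm⟩, ⟨k₂, hk₂.symm⟩⟩
  · rintro ⟨⟨l₁, rfl⟩, ⟨l₂, rfl⟩⟩
    refine ⟨((Real.cos ((l₁ : ℝ) * Real.pi) * Real.cos ((l₂ : ℝ) * Real.pi) : ℝ) : ℂ), ?_⟩
    rw [hU]
    have hz : pauli wv = 0 := by
      rw [pauli_entries]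
      ext i j
      fin_cases i <;> fin_cases j <;>
        simp [hwv, Real.sin_int_mul_pi]
    rw [hz, smul_zero, add_zero]
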